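/- arXiv:1708.03032 — 4 statements merged into one kernel-verified Lean document; each statement's English description precedes it below -/
import Mathlib

section
/- Let K be an infinite field of characteristic different from 2, n ≥ 2, and G an abelian group. For η, η' ∈ G^{n−1}, the elementary gradings (UJ_n, η) and (UJ_n, η') are graded-isomorphic if and only if η = η' or η = rev η'. In particular, the equivalence classes of G^{n−1} under the relation identifying each sequence with its reversal are in one-to-one correspondence with the isomorphism classes of elementary G-gradings on UJ_n. -/
open Matrix

/-- The submodule of upper triangular `n × n` matrices over `K`. -/
def UTs (K : Type*) [Field K] (n : ℕ) : Submodule K (Matrix (Fin n) (Fin n) K) where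
  carrier := {M | ∀ i j : Fin n, (j : ℕ) < (i : ℕ) → M i j = 0}
  add_mem' := by
    intro a b ha hb i j h
    simp [ha i j h, hb i j h]
  zero_mem' := by
    intro i j h
    simp
  smul_mem' := by
    intro c a ha i j h
    simp [ha i j h]

/-- `UJ K n` : the underlying space of the Jordan algebra of upper triangular matrices. -/
abbrev UJ (K : Type*) [Field K] (n : ℕ) : Type _ := ↥(UTs K n)

theorem mem_UTs {K : Type*} [Field K] {n : ℕ} {a : Matrix (Fin n) (Fin n) K} :
    a ∈ UTs K n ↔ ∀ i j : Fin n, (j : ℕ) < (i : ℕ) → a i j = 0 := Iff.rfl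

theorem UTs_mul_mem {K : Type*} [Field K] {n : ℕ} {a b : Matrix (Fin n) (Fin n) K}
    (ha : a ∈ UTs K n) (hb : b ∈ UTs K n) : a * b ∈ UTs K n := by
  rw [mem_UTs] at ha hb ⊢
  intro i j h
  rw [Matrix.mul_apply]
  apply Finset.sum_eq_zero
  intro k _
  rcases lt_or_ge (k : ℕ) (i : ℕ) with hk | hk
  · rw [ha i k hk, zero_mul]
  · rw [hb k j (lt_of_lt_of_le h hk), mul_zero]

/-- The Jordan product `x ∘ y = xy + yx` on upper triangular matrices. -/
def jmul {K : Type*} [Field K] {n : ℕ} (x y : UJ K n) : UJ K n :=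
  ⟨x.1 * y.1 + y.1 * x.1, (UTs K n).add_mem (UTs_mul_mem x.2 y.2) (UTs_mul_mem y.2 x.2)⟩

/-- The matrix unit `e_{ij}` (with `i ≤ j`) as an element of `UJ K n`. -/
def Eu (K : Type*) [Field K] {n : ℕ} (i j : Fin n) (h : i ≤ j) : UJ K n :=
  ⟨Matrix.single i j 1, by
    rw [mem_UTs]
    intro a b hab
    by_cases h1 : i = a ∧ j = b
    · exfalso
      rcases h1 with ⟨rfl, rfl⟩
      exact absurd hab (not_lt.mpr h)
    · simp only [Matrix.single, Matrix.of_apply, if_neg h1]⟩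

/-- `Y⁺_{i:m} = e_{i:m} + e_{−i:m}` (`0`-based index `i`, `i + m < n`). -/
def Yp (K : Type*) [Field K] {n : ℕ} (i m : ℕ) (h : i + m < n) : UJ K n :=
  Eu K ⟨i, by omega⟩ ⟨i + m, h⟩ (Fin.mk_le_mk.mpr (by omega)) +
  Eu K ⟨n - 1 - i - m, by omega⟩ ⟨n - 1 - i, by omega⟩ (Fin.mk_le_mk.mpr (by omega))

/-- `Y⁻_{i:m} = e_{i:m} − e_{−i:m}` (`0`-based index `i`, `i + m < n`). -/
def Ym (K : Type*) [Field K] {n : ℕ} (i m : ℕ) (h : i + m < n) : UJ K n :=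
  Eu K ⟨i, by omega⟩ ⟨i + m, h⟩ (Fin.mk_le_mk.mpr (by omega)) -
  Eu K ⟨n - 1 - i - m, by omega⟩ ⟨n - 1 - i, by omega⟩ (Fin.mk_le_mk.mpr (by omega))

/-- A `G`-grading on the Jordan algebra `UJ K n`: a direct sum decomposition into
`K`-subspaces `comp g` with `comp g ∘ comp h ⊆ comp (g * h)`. -/
structure UJGrading (K : Type*) [Field K] (n : ℕ) (G : Type*) [Group G] where
  comp : G → Submodule K (UJ K n)
  indep : iSupIndep comp
  sup_top : (⨆ g, comp g) = ⊤
  jmul_mem : ∀ (g h : G) (x y : UJ K n), x ∈ comp g → y ∈ comp h → jmul x y ∈ comp (g * h)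

/-- A graded isomorphism between two families of components: a bijective linear map
preserving the Jordan product and mapping each component onto the corresponding one. -/
def GradedIso {K : Type*} [Field K] {n : ℕ} {G : Type*} [Group G]
    (A A' : G → Submodule K (UJ K n)) : Prop :=
  ∃ ψ : UJ K n ≃ₗ[K] UJ K n,
    (∀ x y, ψ (jmul x y) = jmul (ψ x) (ψ y)) ∧
    ∀ g, (A g).map (ψ : UJ K n →ₗ[K] UJ K n) = A' g

/-- A family of components is elementary if every matrix unit is homogeneous. -/
def IsElementaryFam {K : Type*} [Field K] {n : ℕ} {G : Type*} [Group G]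
    (A : G → Submodule K (UJ K n)) : Prop :=
  ∀ (i j : Fin n) (h : i ≤ j), ∃ g, Eu K i j h ∈ A g

/-- A family of components is of mirror type (MT) if every nonzero `Y⁺_{i:m}`, `Y⁻_{i:m}`
is homogeneous, and their degrees differ whenever both are nonzero. -/
def IsMTFam {K : Type*} [Field K] {n : ℕ} {G : Type*} [Group G]
    (A : G → Submodule K (UJ K n)) : Prop :=
  ∀ (i m : ℕ) (h : i + m < n),
    (Yp K i m h ≠ 0 → ∃ g, Yp K i m h ∈ A g) ∧
    (Ym K i m h ≠ 0 → ∃ g, Ym K i m h ∈ A g) ∧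
    (Yp K i m h ≠ 0 → Ym K i m h ≠ 0 →
      ∀ g g' : G, Yp K i m h ∈ A g → Ym K i m h ∈ A g' → g ≠ g')

/-- The degree of the matrix unit `e_{ij}` in the elementary grading defined by `η`:
`g_i g_{i+1} ⋯ g_{j-1}`. -/
def elemDeg {n : ℕ} (G : Type*) [CommGroup G] (η : Fin (n - 1) → G) (i j : Fin n) : G :=
  ∏ k ∈ (Finset.Ico (i : ℕ) (j : ℕ)).attach,
    η ⟨k.1, by have hk := Finset.mem_Ico.mp k.2; have hj := j.isLt; omega⟩

/-- The components of the elementary grading `(UJ_n, η)`. -/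
def elemComp (K : Type*) [Field K] {n : ℕ} {G : Type*} [CommGroup G]
    (η : Fin (n - 1) → G) (g : G) : Submodule K (UJ K n) :=
  Submodule.span K {x : UJ K n | ∃ (i j : Fin n) (h : i ≤ j), elemDeg G η i j = g ∧ x = Eu K i j h}

/-- The degree of `Y⁺_{i:m}` in the MT grading determined by `η ∈ G^{⌈(n-1)/2⌉}`. -/
def mtDeg {n : ℕ} (G : Type*) [CommGroup G] (η : Fin (n / 2) → G)
    (i m : ℕ) (h : i + m < n) : G :=
  ∏ k ∈ (Finset.range m).attach,
    η ⟨min (i + k.1) (n - 2 - (i + k.1)), by have hk := Finset.mem_range.mp k.2; omega⟩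

/-- The components of the MT grading `(UJ_n, t, η)`:
`deg Y⁺_{i:m}` is `mtDeg η i m` and `deg Y⁻_{i:m} = t ⬝ mtDeg η i m`. -/
def mtComp (K : Type*) [Field K] {n : ℕ} {G : Type*} [CommGroup G]
    (t : G) (η : Fin (n / 2) → G) (g : G) : Submodule K (UJ K n) :=
  Submodule.span K {x : UJ K n |
    (∃ (i m : ℕ) (h : i + m < n), mtDeg G η i m h = g ∧ x = Yp K i m h) ∨
    (∃ (i m : ℕ) (h : i + m < n), t * mtDeg G η i m h = g ∧ x = Ym K i m h)}

/-- The set `𝒯_m` of permutations that strictly decrease to the value `0` and then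
strictly increase. -/
def TT (m : ℕ) : Set (Equiv.Perm (Fin m)) :=
  {σ | ∃ t : Fin m, (σ t : ℕ) = 0 ∧
    (∀ a b : Fin m, a < b → b ≤ t → σ b < σ a) ∧
    (∀ a b : Fin m, t ≤ a → a < b → σ a < σ b)}

/-- The left-normed Jordan product of a list of elements (`0` for the empty list). -/
def jprod {K : Type*} [Field K] {n : ℕ} : List (UJ K n) → UJ K n
  | [] => 0
  | x :: xs => xs.foldl jmul x

/-- The `k`-th left-normed Jordan power `x ∘ x ∘ ⋯ ∘ x` (`k` factors, `0` for `k = 0`). -/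
def jpow {K : Type*} [Field K] {n : ℕ} (x : UJ K n) : ℕ → UJ K n
  | 0 => 0
  | 1 => x
  | (k + 2) => jmul (jpow x (k + 1)) x

/-!
A graded isomorphism `ψ` is a Jordan automorphism. Since `x ∘ x = 2x²`, square-zero elements
are strictly upper triangular, so `ψ` preserves the radical `J` and `J²` (which is spanned by
the products `e_{i,i+1} ∘ e_{i+1,j}`), and induces an invertible map on `J / J² ≅ K^{n-1}`.
Its matrix `C` has entries `C i k = (ψ e_{k,k+1})_{i,i+1}`. A nonzero term of the Leibniz
expansion of `det C` gives a permutation `σ` with `C i (σ i) ≠ 0`; homogeneity gives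
`η' i = η (σ i)`, and the `(i, i+2)` entry of `ψ e_k ∘ ψ e_l = 0` for non-adjacent `k, l`
shows that `σ` is an automorphism of the path graph, i.e. the identity or the reversal.
Conversely, reflection in the antidiagonal is a Jordan automorphism carrying `(UJ_n, η ∘ rev)`
onto `(UJ_n, η)`.
-/

section Combinatorics

open SimpleGraph

theorem Matrix.exists_perm_forall_ne_zero_of_det_ne_zero {ι R : Type*} [Fintype ι]
    [DecidableEq ι] [CommRing R] {M : Matrix ι ι R} (h : M.det ≠ 0) :
    ∃ σ : Equiv.Perm ι, ∀ i, M i (σ i) ≠ 0 := by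
  rw [← Matrix.det_transpose, Matrix.det_apply] at h
  obtain ⟨σ, -, hσ⟩ := Finset.exists_ne_zero_of_sum_ne_zero h
  exact ⟨σ, fun i hi => hσ (by rw [Finset.prod_eq_zero (Finset.mem_univ i) hi, smul_zero])⟩

theorem SimpleGraph.adj_of_mul_add_mul_eq_zero {ι K : Type*} [Field K] (h2 : (2 : K) ≠ 0)
    {Γ : SimpleGraph ι} {a b : ι → K} (h : ∀ k l, ¬Γ.Adj k l → a k * b l + a l * b k = 0)
    {k l : ι} (hk : a k ≠ 0) (hl : b l ≠ 0) : Γ.Adj k l := by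
  by_contra hkl
  have hbk : b k = 0 := by
    have := h k k (Γ.irrefl)
    rw [← two_mul] at this
    simpa [h2, hk] using this
  simpa [hbk, hk, hl] using h k l hkl

theorem SimpleGraph.pathGraph_adj_rev {m : ℕ} {i j : Fin m} :
    (pathGraph m).Adj i.rev j.rev ↔ (pathGraph m).Adj i j := by
  simp only [pathGraph_adj, Fin.val_rev]
  omega

theorem Equiv.Perm.eq_one_of_pathGraph_adj {m : ℕ} (σ : Equiv.Perm (Fin m))
    (hσ : ∀ i j, (pathGraph m).Adj i j → (pathGraph m).Adj (σ i) (σ j)) (hm : 1 < m)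
    (h01 : (σ ⟨1, hm⟩ : ℕ) = σ ⟨0, by omega⟩ + 1) : σ = 1 := by
  have hσ_val : ∀ i (hi : i < m), (σ ⟨i, hi⟩ : ℕ) = σ ⟨0, by omega⟩ + i := by
    intro i
    induction i using Nat.strong_induction_on with
    | _ i ih =>
      intro hi
      match i, ih with
      | 0, _ => rfl
      | 1, _ => exact h01
      | i + 2, ih =>
        have h1 := ih (i + 1) (by omega) (by omega)
        have h0 := ih i (by omega) (by omega)
        have hadj := pathGraph_adj.mp
          (hσ ⟨i + 1, by omega⟩ ⟨i + 2, hi⟩ (pathGraph_adj.mpr (Or.inl rfl)))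
        rcases hadj with hadj | hadj
        · omega
        · have := σ.injective (Fin.ext (by omega) : σ ⟨i + 2, hi⟩ = σ ⟨i, by omega⟩)
          simp [Fin.ext_iff] at this
  have h0 : (σ ⟨0, by omega⟩ : ℕ) = 0 := by
    have := hσ_val (m - 1) (by omega)
    have := (σ ⟨m - 1, by omega⟩).2
    omega
  exact Equiv.ext fun i => Fin.ext (by simpa [h0] using hσ_val i i.2)

theorem Equiv.Perm.eq_one_or_eq_revPerm_of_pathGraph_adj {m : ℕ} (σ : Equiv.Perm (Fin m))
    (hσ : ∀ i j, (pathGraph m).Adj i j → (pathGraph m).Adj (σ i) (σ j)) :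
    σ = 1 ∨ σ = Fin.revPerm := by
  rcases lt_or_ge m 2 with hm | hm
  · exact Or.inl (Equiv.ext fun i => Fin.ext (by have := (σ i).2; have := i.2; simp; omega))
  have h01 := hσ ⟨0, by omega⟩ ⟨1, hm⟩ (pathGraph_adj.mpr (Or.inl rfl))
  rcases pathGraph_adj.mp h01 with h | h
  · exact Or.inl (σ.eq_one_of_pathGraph_adj hσ hm h.symm)
  · have hrev := (Fin.revPerm * σ).eq_one_of_pathGraph_adj
      (fun i j hij => pathGraph_adj_rev.mpr (hσ i j hij)) hm (by simp [Fin.val_rev]; omega)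
    exact Or.inr (Equiv.ext fun i => by simpa [Fin.rev_eq_iff] using Equiv.congr_fun hrev i)

end Combinatorics

section AboveDiag

variable {K : Type*} [Field K] {n : ℕ}

/-- `J ^ d`, where `J` is the radical (the strictly upper triangular matrices). -/
def aboveDiag (K : Type*) [Field K] (n d : ℕ) : Submodule K (UJ K n) where
  carrier := {x | ∀ i j : Fin n, (j : ℕ) < i + d → x.1 i j = 0}
  add_mem' {x y} hx hy i j h := by simp [hx i j h, hy i j h]
  zero_mem' _ _ _ := rfl
  smul_mem' c x hx i j h := by simp [hx i j h]

theorem mul_apply_eq_zero_of_mem_aboveDiag {d e : ℕ} {x y : UJ K n} (hx : x ∈ aboveDiag K n d)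
    (hy : y ∈ aboveDiag K n e) {i j : Fin n} (hij : (j : ℕ) < i + (d + e)) :
    (x.1 * y.1) i j = 0 := by
  rw [Matrix.mul_apply]
  refine Finset.sum_eq_zero fun c _ => ?_
  rcases lt_or_ge (c : ℕ) (i + d) with hc | hc
  · rw [hx i c hc, zero_mul]
  · rw [hy c j (by omega), mul_zero]

theorem jmul_mem_aboveDiag {d e : ℕ} {x y : UJ K n} (hx : x ∈ aboveDiag K n d)
    (hy : y ∈ aboveDiag K n e) : jmul x y ∈ aboveDiag K n (d + e) := fun i j hij => by
  change (x.1 * y.1) i j + (y.1 * x.1) i j = 0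
  rw [mul_apply_eq_zero_of_mem_aboveDiag hx hy hij,
    mul_apply_eq_zero_of_mem_aboveDiag hy hx (by omega), add_zero]

theorem mul_apply_of_mem_aboveDiag_one {x y : UJ K n} (hx : x ∈ aboveDiag K n 1)
    (hy : y ∈ aboveDiag K n 1) {i c j : Fin n} (hc : (c : ℕ) = i + 1) (hj : (j : ℕ) = i + 2) :
    (x.1 * y.1) i j = x.1 i c * y.1 c j := by
  rw [Matrix.mul_apply]
  refine Finset.sum_eq_single c (fun b _ hb => ?_) (fun h => absurd (Finset.mem_univ _) h)
  have hb' : (b : ℕ) ≠ c := fun h => hb (Fin.ext h)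
  rcases lt_or_ge (b : ℕ) c with h | h
  · rw [hx i b (by omega), zero_mul]
  · rw [hy b j (by omega), mul_zero]

theorem jmul_apply_of_mem_aboveDiag_one {x y : UJ K n} (hx : x ∈ aboveDiag K n 1)
    (hy : y ∈ aboveDiag K n 1) {i c j : Fin n} (hc : (c : ℕ) = i + 1) (hj : (j : ℕ) = i + 2) :
    (jmul x y).1 i j = x.1 i c * y.1 c j + y.1 i c * x.1 c j := by
  change (x.1 * y.1) i j + (y.1 * x.1) i j = _
  rw [mul_apply_of_mem_aboveDiag_one hx hy hc hj, mul_apply_of_mem_aboveDiag_one hy hx hc hj]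

theorem mem_aboveDiag_one_of_jmul_self_eq_zero (h2 : (2 : K) ≠ 0) {x : UJ K n}
    (hx : jmul x x = 0) : x ∈ aboveDiag K n 1 := by
  intro i j hij
  rcases Nat.lt_or_ge (j : ℕ) i with h | h
  · exact x.2 i j h
  obtain rfl : i = j := Fin.ext (by omega)
  have hsq : (x.1 * x.1) i i = x.1 i i * x.1 i i := by
    refine Finset.sum_eq_single i (fun b _ hb => ?_) (fun h => absurd (Finset.mem_univ _) h)
    dsimp only
    rcases lt_or_gt_of_ne hb with hb | hb
    · rw [x.2 i b hb, zero_mul]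
    · rw [x.2 b i hb, mul_zero]
  have : (2 : K) * (x.1 i i * x.1 i i) = 0 := by
    rw [← hsq, two_mul]
    exact congrArg (fun y : UJ K n => y.1 i i) hx
  simpa [h2] using this

theorem Eu_apply (i j : Fin n) (h : i ≤ j) (a b : Fin n) :
    (Eu K i j h).1 a b = if i = a ∧ j = b then 1 else 0 := rfl

theorem Eu_mem_aboveDiag {d : ℕ} {i j : Fin n} (h : i ≤ j) (hd : (i : ℕ) + d ≤ j) :
    Eu K i j h ∈ aboveDiag K n d := by
  intro a b hab
  rw [Eu_apply, if_neg]
  rintro ⟨rfl, rfl⟩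
  omega

theorem aboveDiag_le_span (d : ℕ) :
    aboveDiag K n d ≤ Submodule.span K
      {x | ∃ (i j : Fin n) (h : i ≤ j), (i : ℕ) + d ≤ j ∧ x = Eu K i j h} := by
  intro x hx
  have hsum : x = ∑ i : Fin n, ∑ j : Fin n,
      if h : i ≤ j ∧ (i : ℕ) + d ≤ j then x.1 i j • Eu K i j h.1 else 0 := by
    ext a b
    simp only [Submodule.coe_sum, Matrix.sum_apply]
    rw [Finset.sum_eq_single a (fun i _ hi => ?rowNe) (fun h => absurd (Finset.mem_univ _) h),
      Finset.sum_eq_single b (fun j _ hj => ?colNe) (fun h => absurd (Finset.mem_univ _) h)]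
    · split_ifs with h
      · simp [Eu_apply]
      · rcases not_and_or.mp h with h | h
        · exact x.2 a b (lt_of_not_ge h)
        · exact hx a b (by omega)
    case colNe => split_ifs <;> simp [Eu_apply, hj]
    case rowNe => exact Finset.sum_eq_zero fun j _ => by split_ifs <;> simp [Eu_apply, hi]
  rw [hsum]
  refine Submodule.sum_mem _ fun i _ => Submodule.sum_mem _ fun j _ => ?_
  split_ifs with h
  · exact Submodule.smul_mem _ _ (Submodule.subset_span ⟨i, j, h.1, h.2, rfl⟩)
  · exact Submodule.zero_mem _

end AboveDiag

section MatrixUnits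

variable {K : Type*} [Field K] {n : ℕ}

theorem jmul_Eu_eq_zero {i j k l : Fin n} (hij : i ≤ j) (hkl : k ≤ l) (hjk : j ≠ k)
    (hli : l ≠ i) : jmul (Eu K i j hij) (Eu K k l hkl) = 0 :=
  Subtype.ext <| by
    change Matrix.single i j 1 * Matrix.single k l 1 +
      Matrix.single k l 1 * Matrix.single i j (1 : K) = 0
    rw [Matrix.single_mul_single_of_ne (h := hjk), Matrix.single_mul_single_of_ne (h := hli),
      add_zero]

theorem Eu_eq_jmul {i j k : Fin n} (hij : i ≤ j) (hjk : j ≤ k) (hik : i ≠ k) :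
    Eu K i k (hij.trans hjk) = jmul (Eu K i j hij) (Eu K j k hjk) :=
  Subtype.ext <| by
    change Matrix.single i k (1 : K) =
      Matrix.single i j 1 * Matrix.single j k 1 + Matrix.single j k 1 * Matrix.single i j 1
    rw [Matrix.single_mul_single_same, Matrix.single_mul_single_of_ne (h := hik.symm), add_zero,
      mul_one]

end MatrixUnits

section JordanAutomorphism

variable {K : Type*} [Field K] {n : ℕ} {ψ : UJ K n ≃ₗ[K] UJ K n}

theorem map_Eu_mem_aboveDiag_one (h2 : (2 : K) ≠ 0)
    (hψ : ∀ x y, ψ (jmul x y) = jmul (ψ x) (ψ y)) {i j : Fin n} (h : i ≤ j)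
    (hij : i ≠ j) :
    ψ (Eu K i j h) ∈ aboveDiag K n 1 := by
  refine mem_aboveDiag_one_of_jmul_self_eq_zero h2 ?_
  rw [← hψ, jmul_Eu_eq_zero h h hij.symm hij.symm, map_zero]

theorem map_mem_aboveDiag_one (h2 : (2 : K) ≠ 0)
    (hψ : ∀ x y, ψ (jmul x y) = jmul (ψ x) (ψ y)) {x : UJ K n} (hx : x ∈ aboveDiag K n 1) :
    ψ x ∈ aboveDiag K n 1 := by
  suffices aboveDiag K n 1 ≤ (aboveDiag K n 1).comap (ψ : UJ K n →ₗ[K] UJ K n) from this hx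
  refine (aboveDiag_le_span 1).trans (Submodule.span_le.mpr ?_)
  rintro _ ⟨i, j, h, hij, rfl⟩
  exact map_Eu_mem_aboveDiag_one h2 hψ h (fun e => by rw [e] at hij; omega)

theorem map_mem_aboveDiag_two (h2 : (2 : K) ≠ 0)
    (hψ : ∀ x y, ψ (jmul x y) = jmul (ψ x) (ψ y)) {x : UJ K n} (hx : x ∈ aboveDiag K n 2) :
    ψ x ∈ aboveDiag K n 2 := by
  suffices aboveDiag K n 2 ≤ (aboveDiag K n 2).comap (ψ : UJ K n →ₗ[K] UJ K n) from this hx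
  refine (aboveDiag_le_span 2).trans (Submodule.span_le.mpr ?_)
  rintro _ ⟨i, k, h, hik, rfl⟩
  let j : Fin n := ⟨i + 1, by omega⟩
  have hij : i ≤ j := Fin.mk_le_mk.mpr (by omega)
  have hjk : j ≤ k := Fin.mk_le_mk.mpr (by omega)
  change ψ (Eu K i k (hij.trans hjk)) ∈ aboveDiag K n 2
  rw [Eu_eq_jmul hij hjk (fun e => by rw [e] at hik; omega), hψ]
  exact jmul_mem_aboveDiag
    (map_Eu_mem_aboveDiag_one h2 hψ hij (fun e => by simp [j, Fin.ext_iff] at e))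
    (map_Eu_mem_aboveDiag_one h2 hψ hjk (fun e => by simp [j, Fin.ext_iff] at e; omega))

end JordanAutomorphism

section Superdiagonal

variable {K : Type*} [Field K] {m : ℕ}

def supUnit (K : Type*) [Field K] (k : Fin m) : UJ K (m + 1) :=
  Eu K k.castSucc k.succ k.castSucc_lt_succ.le

def superdiag : UJ K (m + 1) →ₗ[K] Fin m → K where
  toFun x k := x.1 k.castSucc k.succ
  map_add' _ _ := rfl
  map_smul' _ _ := rfl

theorem superdiag_apply (x : UJ K (m + 1)) (k : Fin m) :
    superdiag x k = x.1 k.castSucc k.succ := rfl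

theorem superdiag_supUnit (k : Fin m) : superdiag (supUnit K k) = Pi.single k 1 := by
  ext l
  simp [superdiag_apply, supUnit, Eu_apply, Pi.single_apply, eq_comm]

theorem supUnit_mem_aboveDiag_one (k : Fin m) : supUnit K k ∈ aboveDiag K (m + 1) 1 :=
  Eu_mem_aboveDiag _ (by simp)

theorem superdiag_eq_zero_of_mem_aboveDiag_two {x : UJ K (m + 1)}
    (hx : x ∈ aboveDiag K (m + 1) 2) : superdiag x = 0 :=
  funext fun k => hx _ _ (by simp)

theorem exists_castSucc_succ {i j : Fin (m + 1)} (h : (j : ℕ) = i + 1) :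
    ∃ k : Fin m, k.castSucc = i ∧ k.succ = j :=
  ⟨⟨i, by omega⟩, rfl, Fin.ext h.symm⟩

theorem jmul_supUnit_eq_zero {k l : Fin m} (hkl : ¬(SimpleGraph.pathGraph m).Adj k l) :
    jmul (supUnit K k) (supUnit K l) = 0 := by
  rw [SimpleGraph.pathGraph_adj, not_or] at hkl
  exact jmul_Eu_eq_zero _ _ (fun h => hkl.1 (by simpa [Fin.ext_iff] using h))
    (fun h => hkl.2 (by simpa [Fin.ext_iff] using h))

/-- The matrix, in the basis of superdiagonal units, of the map induced by `ψ` on `J / J ^ 2`. -/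
def superdiagMatrix (ψ : UJ K (m + 1) ≃ₗ[K] UJ K (m + 1)) : Matrix (Fin m) (Fin m) K :=
  Matrix.of fun i k => superdiag (ψ (supUnit K k)) i

variable {ψ : UJ K (m + 1) ≃ₗ[K] UJ K (m + 1)}

theorem superdiag_map_eq_mulVec (h2 : (2 : K) ≠ 0)
    (hψ : ∀ x y, ψ (jmul x y) = jmul (ψ x) (ψ y))
    {x : UJ K (m + 1)} (hx : x ∈ aboveDiag K (m + 1) 1) :
    superdiag (ψ x) = superdiagMatrix ψ *ᵥ superdiag x := by
  refine LinearMap.eqOn_span (f := superdiag ∘ₗ (ψ : UJ K (m + 1) →ₗ[K] UJ K (m + 1)))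
    (g := (superdiagMatrix ψ).mulVecLin ∘ₗ superdiag) ?_ (aboveDiag_le_span 1 hx)
  rintro _ ⟨i, j, h, hij, rfl⟩
  rcases eq_or_lt_of_le hij with hij | hij
  · obtain ⟨k, rfl, rfl⟩ := exists_castSucc_succ hij.symm
    change superdiag (ψ (supUnit K k)) = superdiagMatrix ψ *ᵥ superdiag (supUnit K k)
    rw [superdiag_supUnit, Matrix.mulVec_single_one]
    rfl
  · have hE : Eu K i j h ∈ aboveDiag K (m + 1) 2 := Eu_mem_aboveDiag h hij
    simp [superdiag_eq_zero_of_mem_aboveDiag_two hE,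
      superdiag_eq_zero_of_mem_aboveDiag_two (map_mem_aboveDiag_two h2 hψ hE)]

theorem isUnit_superdiagMatrix (h2 : (2 : K) ≠ 0)
    (hψ : ∀ x y, ψ (jmul x y) = jmul (ψ x) (ψ y)) : IsUnit (superdiagMatrix ψ) := by
  have hψsymm : ∀ x y, ψ.symm (jmul x y) = jmul (ψ.symm x) (ψ.symm y) := fun x y =>
    ψ.injective (by simp [hψ])
  refine Matrix.mulVec_surjective_iff_isUnit.mp fun w => ?_
  let y := ∑ k, w k • supUnit K k
  have hy : y ∈ aboveDiag K (m + 1) 1 :=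
    Submodule.sum_mem _ fun k _ => Submodule.smul_mem _ _ (supUnit_mem_aboveDiag_one k)
  refine ⟨superdiag (ψ.symm y), ?_⟩
  rw [← superdiag_map_eq_mulVec h2 hψ (map_mem_aboveDiag_one h2 hψsymm hy), ψ.apply_symm_apply]
  ext i
  simp [y, superdiag_supUnit, Finset.sum_apply, Pi.single_apply]

theorem superdiagMatrix_mul_add_mul_eq_zero (h2 : (2 : K) ≠ 0)
    (hψ : ∀ x y, ψ (jmul x y) = jmul (ψ x) (ψ y)) {i j : Fin m} (hij : (j : ℕ) = i + 1)
    {k l : Fin m} (hkl : ¬(SimpleGraph.pathGraph m).Adj k l) :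
    superdiagMatrix ψ i k * superdiagMatrix ψ j l +
      superdiagMatrix ψ i l * superdiagMatrix ψ j k = 0 := by
  have hmem : ∀ k, ψ (supUnit K k) ∈ aboveDiag K (m + 1) 1 := fun k =>
    map_mem_aboveDiag_one h2 hψ (supUnit_mem_aboveDiag_one k)
  have hsucc : i.succ = j.castSucc := Fin.ext (by simp [hij])
  have h0 := congrArg (fun z : UJ K (m + 1) => z.1 i.castSucc j.succ)
    ((hψ _ _).symm.trans ((congrArg ψ (jmul_supUnit_eq_zero hkl)).trans ψ.map_zero))
  rw [jmul_apply_of_mem_aboveDiag_one (hmem k) (hmem l) (c := j.castSucc) (by simp [hij])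
    (by simp [hij])] at h0
  simpa [superdiagMatrix, superdiag_apply, hsucc] using h0

end Superdiagonal

section AntiTranspose

variable {K : Type*} [Field K] {n : ℕ}

def antiTranspose (K : Type*) [Field K] (n : ℕ) : UJ K n ≃ₗ[K] UJ K n :=
  LinearEquiv.ofInvolutive
    { toFun x := ⟨x.1ᵀ.submatrix Fin.rev Fin.rev, fun i j h => x.2 _ _ (by simp; omega)⟩
      map_add' _ _ := rfl
      map_smul' _ _ := rfl }
    fun x => Subtype.ext <| Matrix.ext fun a b => by
      change x.1 a.rev.rev b.rev.rev = x.1 a b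
      rw [Fin.rev_rev, Fin.rev_rev]

theorem coe_antiTranspose (x : UJ K n) :
    (antiTranspose K n x).1 = x.1ᵀ.submatrix Fin.rev Fin.rev := rfl

theorem antiTranspose_jmul (x y : UJ K n) :
    antiTranspose K n (jmul x y) = jmul (antiTranspose K n x) (antiTranspose K n y) := by
  refine Subtype.ext ?_
  change (x.1 * y.1 + y.1 * x.1)ᵀ.submatrix Fin.rev Fin.rev =
    x.1ᵀ.submatrix Fin.rev Fin.revPerm * y.1ᵀ.submatrix Fin.revPerm Fin.rev +
      y.1ᵀ.submatrix Fin.rev Fin.revPerm * x.1ᵀ.submatrix Fin.revPerm Fin.rev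
  rw [Matrix.submatrix_mul_equiv, Matrix.submatrix_mul_equiv, Matrix.transpose_add,
    Matrix.transpose_mul, Matrix.transpose_mul, add_comm]
  rfl

theorem antiTranspose_Eu {i j : Fin n} (h : i ≤ j) :
    antiTranspose K n (Eu K i j h) = Eu K j.rev i.rev (Fin.rev_le_rev.mpr h) := by
  refine Subtype.ext ?_
  ext a b
  simp only [coe_antiTranspose, Matrix.submatrix_apply, Matrix.transpose_apply, Eu_apply]
  refine if_congr ⟨?_, ?_⟩ rfl rfl <;> rintro ⟨rfl, rfl⟩ <;> simp

end AntiTranspose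

section ElementaryGrading

variable {K : Type*} [Field K] {n : ℕ} {G : Type*} [CommGroup G]

theorem elemDeg_eq_prod_Ico (η : Fin (n - 1) → G) (i j : Fin n) :
    elemDeg G η i j =
      ∏ k ∈ Finset.Ico (i : ℕ) j, if h : k < n - 1 then η ⟨k, h⟩ else 1 := by
  rw [elemDeg, ← Finset.prod_attach (Finset.Ico (i : ℕ) j)
    (fun k => if h : k < n - 1 then η ⟨k, h⟩ else 1)]
  refine Finset.prod_congr rfl fun k _ => ?_
  have := Finset.mem_Ico.mp k.2
  rw [dif_pos (by omega)]

theorem elemDeg_castSucc_succ {m : ℕ} (η : Fin m → G) (k : Fin m) :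
    elemDeg G (n := m + 1) η k.castSucc k.succ = η k := by
  rw [elemDeg_eq_prod_Ico, Fin.val_castSucc, Fin.val_succ, Nat.Ico_succ_singleton,
    Finset.prod_singleton, dif_pos (show (k : ℕ) < m + 1 - 1 by omega)]
  rfl

theorem elemDeg_comp_rev (η : Fin (n - 1) → G) (i j : Fin n) :
    elemDeg G (η ∘ Fin.rev) i j = elemDeg G η j.rev i.rev := by
  rcases lt_or_ge n 2 with hn | hn
  · obtain rfl : i = j := Fin.ext (by omega)
    simp [elemDeg_eq_prod_Ico]
  have hj := j.2
  rw [elemDeg_eq_prod_Ico, elemDeg_eq_prod_Ico, Fin.val_rev, Fin.val_rev,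
    show n - (j + 1) = n - 2 + 1 - j by omega, show n - (i + 1) = n - 2 + 1 - i by omega,
    ← Finset.prod_Ico_reflect _ _ (by omega)]
  refine Finset.prod_congr rfl fun k hk => ?_
  have := Finset.mem_Ico.mp hk
  rw [dif_pos (by omega), dif_pos (by omega), Function.comp_apply]
  congr 1
  ext
  simp only [Fin.val_rev]
  omega

theorem Eu_mem_elemComp (η : Fin (n - 1) → G) {i j : Fin n} (h : i ≤ j) :
    Eu K i j h ∈ elemComp K η (elemDeg G η i j) :=
  Submodule.subset_span ⟨i, j, h, rfl, rfl⟩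

theorem apply_eq_zero_of_mem_elemComp {η : Fin (n - 1) → G} {g : G} {x : UJ K n}
    (hx : x ∈ elemComp K η g) {a b : Fin n} (hab : elemDeg G η a b ≠ g) : x.1 a b = 0 := by
  induction hx using Submodule.span_induction with
  | mem _ hx =>
    obtain ⟨i, j, h, hdeg, rfl⟩ := hx
    rw [Eu_apply, if_neg]
    rintro ⟨rfl, rfl⟩
    exact hab hdeg
  | zero => rfl
  | add x y _ _ hx hy => simp [hx, hy]
  | smul c x _ hx => simp [hx]

theorem map_antiTranspose_elemComp (η : Fin (n - 1) → G) (g : G) :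
    (elemComp K η g).map (antiTranspose K n : UJ K n →ₗ[K] UJ K n) =
      elemComp K (η ∘ Fin.rev) g := by
  rw [elemComp, elemComp, Submodule.map_span]
  congr 1
  ext x
  constructor
  · rintro ⟨_, ⟨i, j, h, rfl, rfl⟩, rfl⟩
    exact ⟨j.rev, i.rev, _, by simp [elemDeg_comp_rev], antiTranspose_Eu h⟩
  · rintro ⟨i, j, h, rfl, rfl⟩
    refine ⟨_, ⟨j.rev, i.rev, Fin.rev_le_rev.mpr h, (elemDeg_comp_rev η i j).symm, rfl⟩,
      ?_⟩
    simp [antiTranspose_Eu]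

theorem gradedIso_elemComp_comp_rev (η : Fin (n - 1) → G) :
    GradedIso (elemComp K (η ∘ Fin.rev)) (elemComp K η) := by
  refine ⟨antiTranspose K n, antiTranspose_jmul, fun g => ?_⟩
  rw [map_antiTranspose_elemComp, Function.comp_assoc, Fin.rev_involutive.comp_self,
    Function.comp_id]

end ElementaryGrading

section Classification

open SimpleGraph

variable {K : Type*} [Field K] {m : ℕ} {G : Type*} [CommGroup G]
  {ψ : UJ K (m + 1) ≃ₗ[K] UJ K (m + 1)}

theorem pathGraph_adj_of_superdiagMatrix_ne_zero (h2 : (2 : K) ≠ 0)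
    (hψ : ∀ x y, ψ (jmul x y) = jmul (ψ x) (ψ y)) {i j k l : Fin m}
    (hij : (pathGraph m).Adj i j) (hk : superdiagMatrix ψ i k ≠ 0)
    (hl : superdiagMatrix ψ j l ≠ 0) : (pathGraph m).Adj k l := by
  rcases pathGraph_adj.mp hij with hij | hji
  · exact adj_of_mul_add_mul_eq_zero h2
      (fun k l hkl => superdiagMatrix_mul_add_mul_eq_zero h2 hψ hij.symm hkl) hk hl
  · exact (adj_of_mul_add_mul_eq_zero h2
      (fun k l hkl => superdiagMatrix_mul_add_mul_eq_zero h2 hψ hji.symm hkl) hl hk).symm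

theorem eq_of_superdiagMatrix_ne_zero {η η' : Fin m → G}
    (hgrad : ∀ g, (elemComp K (n := m + 1) η g).map (ψ : UJ K (m + 1) →ₗ[K] UJ K (m + 1)) =
      elemComp K η' g)
    {i k : Fin m} (h : superdiagMatrix ψ i k ≠ 0) : η' i = η k := by
  have hmem : ψ (supUnit K k) ∈ elemComp K η' (η k) := by
    rw [← hgrad, ← elemDeg_castSucc_succ η k]
    exact Submodule.mem_map_of_mem (Eu_mem_elemComp (n := m + 1) η _)
  by_contra hne
  exact h (apply_eq_zero_of_mem_elemComp hmem (by rwa [elemDeg_castSucc_succ]))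

theorem eq_or_eq_comp_rev_of_gradedIso (h2 : (2 : K) ≠ 0) {η η' : Fin m → G}
    (hiso : GradedIso (elemComp K (n := m + 1) η) (elemComp K η')) :
    η = η' ∨ η = η' ∘ Fin.rev := by
  obtain ⟨ψ, hjmul, hgrad⟩ := hiso
  have hdet := ((superdiagMatrix ψ).isUnit_iff_isUnit_det.mp
    (isUnit_superdiagMatrix h2 hjmul)).ne_zero
  obtain ⟨σ, hσ⟩ := Matrix.exists_perm_forall_ne_zero_of_det_ne_zero hdet
  have hdeg i := eq_of_superdiagMatrix_ne_zero hgrad (hσ i)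
  rcases σ.eq_one_or_eq_revPerm_of_pathGraph_adj fun i j hij =>
    pathGraph_adj_of_superdiagMatrix_ne_zero h2 hjmul hij (hσ i) (hσ j) with rfl | rfl
  · exact Or.inl (funext fun i => (hdeg i).symm)
  · exact Or.inr (funext fun i => by simpa using (hdeg i.rev).symm)

end Classification

theorem statement_1_general {K : Type*} [Field K] (h2 : (2 : K) ≠ 0)
    {n : ℕ} {G : Type*} [CommGroup G] (η η' : Fin (n - 1) → G) :
    GradedIso (elemComp K η) (elemComp K η') ↔ (η = η' ∨ η = η' ∘ Fin.rev) := by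
  refine ⟨fun hiso => ?_, ?_⟩
  · cases n with
    | zero => exact Or.inl (funext fun i => absurd i.2 (by omega))
    | succ m => exact eq_or_eq_comp_rev_of_gradedIso h2 hiso
  · rintro (rfl | rfl)
    · exact ⟨LinearEquiv.refl K _, fun _ _ => rfl, fun _ => Submodule.map_id _⟩
    · exact gradedIso_elemComp_comp_rev η'

/-- Two elementary gradings `(UJ_n, η)` and `(UJ_n, η')` are graded-isomorphic iff
`η = η'` or `η = rev η'`. -/
theorem statement_1 {K : Type*} [Field K] [Infinite K] (h2 : (2 : K) ≠ 0)
    {n : ℕ} (hn : 2 ≤ n) {G : Type*} [CommGroup G] (η η' : Fin (n - 1) → G) :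
    GradedIso (elemComp K η) (elemComp K η') ↔ (η = η' ∨ η = η' ∘ Fin.rev) :=
  statement_1_general h2 η η'
end

section
/- Let K be a field of characteristic different from 2, n ≥ 2, and G an abelian group. (a) If (UJ_n, t, η) is an MT grading (t ∈ G of order 2), then the homogeneous component of degree t contains an element x whose n-th left-normed Jordan power x∘x∘⋯∘x (n factors) is nonzero. (b) If UJ_n carries an elementary G-grading, then for every g ∈ G with g ≠ 1, every homogeneous element x of degree g satisfies x∘x∘⋯∘x = 0 (n factors, left-normed). -/
open Matrix

/-!
A Jordan power of a single element is, up to the scalar `2 ^ (k - 1)`, its associative power,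
since `x` commutes with its own powers. For (a), the element `Y⁻_{1:0} = e₁₁ - eₙₙ` has degree
`t` and is diagonal with a `1` in position `(1,1)`, so none of its powers vanish. For (b), the
diagonal matrix units are Jordan idempotents up to the factor `2`, hence have degree `1`; the
identity `(e ∘ x) ∘ e - e ∘ x = 2 x_ii e` for `e = e_ii` puts `2 x_ii e` in `A_g ∩ A_1 = 0` when
`x ∈ A_g`, `g ≠ 1`. So such `x` is strictly upper triangular and its `n`-th power vanishes.
-/

namespace Matrix

variable {R : Type*} {n : ℕ}

def ZeroBelowSuperdiag [Zero R] (M : Matrix (Fin n) (Fin n) R) (k : ℕ) : Prop :=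
  ∀ i j : Fin n, (j : ℕ) < i + k → M i j = 0

theorem ZeroBelowSuperdiag.mul [NonUnitalNonAssocSemiring R] {M N : Matrix (Fin n) (Fin n) R}
    {a b : ℕ} (hM : M.ZeroBelowSuperdiag a) (hN : N.ZeroBelowSuperdiag b) :
    (M * N).ZeroBelowSuperdiag (a + b) := by
  intro i j hij
  rw [mul_apply]
  refine Finset.sum_eq_zero fun k _ => ?_
  rcases lt_or_ge (k : ℕ) (i + a) with hk | hk
  · rw [hM i k hk, zero_mul]
  · rw [hN k j (by omega), mul_zero]

theorem ZeroBelowSuperdiag.pow [Semiring R] {M : Matrix (Fin n) (Fin n) R}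
    (hM : M.ZeroBelowSuperdiag 1) (k : ℕ) : (M ^ k).ZeroBelowSuperdiag k := by
  induction k with
  | zero =>
    intro i j hij
    exact one_apply_ne fun h => by subst h; omega
  | succ k ih => rw [pow_succ]; exact ih.mul hM

theorem ZeroBelowSuperdiag.pow_eq_zero [Semiring R] {M : Matrix (Fin n) (Fin n) R}
    (hM : M.ZeroBelowSuperdiag 1) : M ^ n = 0 := by
  ext i j
  exact hM.pow n i j (by omega)

end Matrix

section JordanProduct

variable {K : Type*} [Field K] {n : ℕ}

theorem coe_jmul (x y : UJ K n) :
    (jmul x y : Matrix (Fin n) (Fin n) K) = x * y + y * x :=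
  rfl

theorem coe_jpow_succ (x : UJ K n) (k : ℕ) :
    (jpow x (k + 1) : Matrix (Fin n) (Fin n) K) =
      (2 : K) ^ k • (x : Matrix (Fin n) (Fin n) K) ^ (k + 1) := by
  induction k with
  | zero => simp [jpow]
  | succ k ih =>
    rw [jpow, coe_jmul, ih, smul_mul_assoc, mul_smul_comm, ← pow_succ, ← pow_succ', ← add_smul,
      pow_succ (2 : K), mul_two]

theorem coe_Eu (i j : Fin n) (h : i ≤ j) :
    (Eu K i j h : Matrix (Fin n) (Fin n) K) = single i j 1 :=
  rfl

theorem Eu_ne_zero (i j : Fin n) (h : i ≤ j) : Eu K i j h ≠ 0 := fun h0 => by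
  simpa [coe_Eu] using congrArg (fun x : UJ K n => (x : Matrix (Fin n) (Fin n) K) i j) h0

theorem jmul_Eu_self (i : Fin n) :
    jmul (Eu K i i le_rfl) (Eu K i i le_rfl) = (2 : K) • Eu K i i le_rfl := by
  ext : 1
  simp [coe_jmul, coe_Eu, two_smul]

theorem jmul_jmul_Eu_sub_jmul (x : UJ K n) (i : Fin n) :
    jmul (jmul (Eu K i i le_rfl) x) (Eu K i i le_rfl) - jmul (Eu K i i le_rfl) x =
      (2 * (x : Matrix (Fin n) (Fin n) K) i i) • Eu K i i le_rfl := by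
  ext : 1
  simp only [Submodule.coe_sub, Submodule.coe_smul, coe_jmul, coe_Eu]
  have hee : single i i (1 : K) * single i i 1 = single i i 1 := by simp
  have hexe : single i i (1 : K) * (x : Matrix (Fin n) (Fin n) K) * single i i 1 =
      (x : Matrix (Fin n) (Fin n) K) i i • single i i 1 := by
    simp [smul_single]
  rw [add_mul, mul_add, mul_assoc _ (single i i 1), hee, ← mul_assoc (single i i 1), hee,
    ← mul_assoc, hexe, mul_smul, two_smul]
  abel

end JordanProduct

namespace UJGrading

variable {K : Type*} [Field K] {n : ℕ} {G : Type*} [Group G] (A : UJGrading K n G)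

theorem eq_zero_of_mem_of_mem {g h : G} (hgh : g ≠ h) {x : UJ K n} (hxg : x ∈ A.comp g)
    (hxh : x ∈ A.comp h) : x = 0 :=
  Submodule.disjoint_def.mp (A.indep.pairwiseDisjoint hgh) x hxg hxh

theorem eq_one_of_jmul_self_eq_smul {x : UJ K n} {c : K} {g : G} (hx : x ≠ 0) (hc : c ≠ 0)
    (hxx : jmul x x = c • x) (hxg : x ∈ A.comp g) : g = 1 := by
  by_contra hg
  have hsq : c • x ∈ A.comp (g * g) := hxx ▸ A.jmul_mem g g x x hxg hxg
  exact smul_ne_zero hc hx <|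
    A.eq_zero_of_mem_of_mem (mul_eq_left.not.mpr hg) hsq (Submodule.smul_mem _ c hxg)

theorem Eu_diag_mem_comp_one (h2 : (2 : K) ≠ 0) {i : Fin n} {g : G}
    (hg : Eu K i i le_rfl ∈ A.comp g) : Eu K i i le_rfl ∈ A.comp 1 :=
  A.eq_one_of_jmul_self_eq_smul (Eu_ne_zero i i le_rfl) h2 (jmul_Eu_self i) hg ▸ hg

theorem diag_eq_zero_of_mem (h2 : (2 : K) ≠ 0) (hE : IsElementaryFam A.comp) {g : G}
    (hg : g ≠ 1) {x : UJ K n} (hx : x ∈ A.comp g) (i : Fin n) :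
    (x : Matrix (Fin n) (Fin n) K) i i = 0 := by
  set e := Eu K i i le_rfl
  have he : e ∈ A.comp 1 := A.Eu_diag_mem_comp_one h2 (hE i i le_rfl).choose_spec
  have hex : jmul e x ∈ A.comp g := by simpa using A.jmul_mem 1 g e x he hx
  have hexe : jmul (jmul e x) e ∈ A.comp g := by simpa using A.jmul_mem g 1 _ e hex he
  have hg' : (2 * (x : Matrix (Fin n) (Fin n) K) i i) • e ∈ A.comp g :=
    jmul_jmul_Eu_sub_jmul x i ▸ Submodule.sub_mem _ hexe hex
  have h0 := A.eq_zero_of_mem_of_mem hg hg' (Submodule.smul_mem _ _ he)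
  simpa [h2, Eu_ne_zero, e] using h0

theorem zeroBelowSuperdiag_one_of_mem (h2 : (2 : K) ≠ 0) (hE : IsElementaryFam A.comp)
    {g : G} (hg : g ≠ 1) {x : UJ K n} (hx : x ∈ A.comp g) :
    (x : Matrix (Fin n) (Fin n) K).ZeroBelowSuperdiag 1 := by
  intro i j hij
  rcases (Nat.lt_succ_iff.mp hij).lt_or_eq with hlt | heq
  · exact x.2 i j hlt
  · rw [Fin.ext heq]
    exact A.diag_eq_zero_of_mem h2 hE hg hx i

theorem jpow_eq_zero_of_mem (h2 : (2 : K) ≠ 0) (hE : IsElementaryFam A.comp) {g : G}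
    (hg : g ≠ 1) {x : UJ K n} (hx : x ∈ A.comp g) : jpow x n = 0 := by
  cases n with
  | zero => rfl
  | succ m =>
    ext : 1
    rw [coe_jpow_succ, (A.zeroBelowSuperdiag_one_of_mem h2 hE hg hx).pow_eq_zero, smul_zero]
    rfl

end UJGrading

section MirrorType

variable {K : Type*} [Field K] {n : ℕ}

theorem Ym_zero_zero_mem_mtComp {G : Type*} [CommGroup G] (t : G) (η : Fin (n / 2) → G)
    (h : 0 + 0 < n) : Ym K 0 0 h ∈ mtComp K t η t :=
  Submodule.subset_span (Or.inr ⟨0, 0, h, by simp [mtDeg], rfl⟩)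

theorem coe_Ym_zero_zero (h : 0 + 0 < n) :
    (Ym K 0 0 h : Matrix (Fin n) (Fin n) K) =
      diagonal (Pi.single ⟨0, h⟩ 1 - Pi.single ⟨n - 1, by omega⟩ 1) := by
  simp only [Ym, Submodule.coe_sub, coe_Eu, Nat.sub_zero, Nat.add_zero, ← diagonal_single,
    diagonal_sub]
  rfl

theorem jpow_Ym_zero_zero_ne_zero (h2 : (2 : K) ≠ 0) (hn : 2 ≤ n) :
    jpow (Ym K 0 0 (show 0 + 0 < n by omega)) n ≠ 0 := by
  obtain ⟨m, rfl⟩ : ∃ m, n = m + 1 := ⟨n - 1, by omega⟩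
  intro h0
  have h00 :=
    congrArg (fun x : UJ K (m + 1) => (x : Matrix (Fin (m + 1)) (Fin (m + 1)) K) 0 0) h0
  have hm : m ≠ 0 := by omega
  simp [coe_jpow_succ, coe_Ym_zero_zero, diagonal_pow, Fin.ext_iff, hm, h2] at h00

end MirrorType

/-- (a) In an MT grading `(UJ_n, t, η)`, the component of degree `t` contains an element
whose `n`-th left-normed Jordan power is nonzero.
(b) In an elementary grading, every homogeneous element of degree `g ≠ 1` has vanishing
`n`-th left-normed Jordan power. -/
theorem statement_4 {K : Type*} [Field K] (h2 : (2 : K) ≠ 0)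
    {n : ℕ} (hn : 2 ≤ n) {G : Type*} [CommGroup G] :
    (∀ (t : G), orderOf t = 2 → ∀ η : Fin (n / 2) → G,
      ∃ x : UJ K n, x ∈ mtComp K t η t ∧ jpow x n ≠ 0) ∧
    (∀ A : UJGrading K n G, IsElementaryFam A.comp →
      ∀ g : G, g ≠ 1 → ∀ x ∈ A.comp g, jpow x n = 0) :=
  ⟨fun t _ η => ⟨_, Ym_zero_zero_mem_mtComp t η _, jpow_Ym_zero_zero_ne_zero h2 hn⟩,
    fun A hE _ hg _ hx => A.jpow_eq_zero_of_mem h2 hE hg hx⟩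
end

section
/- Let G be an abelian group and η ∈ G^{n−1}. A sequence μ = (a_1,…,a_{n−1}) ∈ G^{n−1} is Jordan η-good for (UJ_n, η) — i.e. there exist strictly upper triangular matrix units r_1,…,r_{n−1}, homogeneous in (UJ_n, η) with deg r_k = a_k, whose left-normed Jordan product r_1 ∘ r_2 ∘ ⋯ ∘ r_{n−1} is nonzero — if and only if μ = ση for some σ ∈ 𝒯_{n−1}. -/
/-!
For strictly upper triangular matrix units, `e_ab ∘ e_cd` is `e_cb` if `d = a`, `e_ad` if `c = b`,
and `0` otherwise. Hence a nonzero left-normed product of `n - 1` matrix units is a matrix unit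
`e_ab`, and its length `b - a ≤ n - 1` is the sum of the lengths of the factors: every factor is a
superdiagonal unit `e_{c_k, c_k + 1}`, and each one is glued to an end of the block built so far.
So the product is nonzero exactly when every prefix `c_1, …, c_k` fills an interval, that is, when
all sublevel sets of `σ = c⁻¹` are intervals; for a permutation this means that `σ` decreases to
the value `1` and then increases, i.e. `σ ∈ 𝒯_{n-1}`, and the `k`-th factor has degree `η (σ⁻¹ k)`.
-/
open Matrix

section MatrixUnits

variable {ι R : Type*} [LinearOrder ι] [Fintype ι] [Semiring R]

theorem single_one_mul_add_mul_single_one {a b c d : ι} (hab : a < b) (hcd : c < d) :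
    single a b (1 : R) * single c d 1 + single c d 1 * single a b 1 =
      if d = a then single c b 1 else if c = b then single a d 1 else 0 := by
  by_cases hda : d = a
  · subst hda
    have hbc : b ≠ c := by rintro rfl; exact absurd (hab.trans hcd) (lt_irrefl _)
    rw [single_mul_single_of_ne _ _ _ _ hbc, single_mul_single_same, if_pos rfl, zero_add, one_mul]
  · rw [single_mul_single_of_ne (1 : R) c d a hda, add_zero, if_neg hda]
    by_cases hcb : c = b
    · rw [hcb, single_mul_single_same, one_mul, if_pos rfl]
    · rw [single_mul_single_of_ne _ _ _ _ (Ne.symm hcb), if_neg hcb]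

end MatrixUnits

theorem mem_TT_iff {m : ℕ} [NeZero m] (σ : Equiv.Perm (Fin m)) :
    σ ∈ TT m ↔ ∀ k : ℕ, {x | (σ x : ℕ) < k}.OrdConnected := by
  constructor
  · rintro ⟨t, -, hdec, hinc⟩ k
    refine ⟨fun x hx z hz y ⟨hxy, hyz⟩ => ?_⟩
    simp only [Set.mem_ofPred_eq] at hx hz ⊢
    rcases le_or_gt y t with hyt | hty
    · rcases hxy.eq_or_lt with rfl | hxy
      · exact hx
      · exact lt_trans (hdec x y hxy hyt) hx
    · rcases hyz.eq_or_lt with rfl | hyz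
      · exact hz
      · exact lt_trans (hinc y z hty.le hyz) hz
  · intro hoc
    have hσt : σ (σ⁻¹ 0) = 0 := σ.apply_symm_apply 0
    have key : ∀ x y z, y ∈ Set.uIcc x z → σ z = 0 → (σ y : ℕ) ≤ σ x := fun x y z hy hz =>
      Nat.lt_succ_iff.mp ((hoc (σ x + 1)).uIcc_subset (Nat.lt_succ_self _) (by simp [hz]) hy)
    refine ⟨σ⁻¹ 0, by simp, fun a b hab hbt => ?_, fun a b hta hab => ?_⟩
    · refine lt_of_le_of_ne (key a b _ ?_ hσt) (fun h => hab.ne (σ.injective h).symm)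
      exact Set.mem_uIcc.2 (Or.inl ⟨hab.le, hbt⟩)
    · refine lt_of_le_of_ne (key b a _ ?_ hσt) (fun h => hab.ne (σ.injective h))
      exact Set.mem_uIcc.2 (Or.inr ⟨hta, hab.le⟩)

theorem eq_one_of_sum_le_card {ι : Type*} [Fintype ι] {f : ι → ℕ} (hf : ∀ i, 1 ≤ f i)
    (hsum : ∑ i, f i ≤ Fintype.card ι) (i : ι) : f i = 1 := by
  by_contra hi
  have : ∑ _i : ι, 1 < ∑ i, f i :=
    Finset.sum_lt_sum (fun i _ => hf i) ⟨i, Finset.mem_univ i, lt_of_le_of_ne (hf i) (Ne.symm hi)⟩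
  simp only [Finset.sum_const, Finset.card_univ, smul_eq_mul, mul_one] at this
  omega

theorem elemDeg_castSucc_succ_s9 {m : ℕ} (G : Type*) [CommGroup G] (η : Fin m → G) (x : Fin m) :
    elemDeg G η x.castSucc x.succ = η x := by
  rw [elemDeg, Finset.prod_eq_single_of_mem
    (⟨x, by simp⟩ : {k // k ∈ Finset.Ico (x.castSucc : ℕ) x.succ}) (Finset.mem_attach _ _)]
  · rfl
  rintro ⟨k, hk⟩ - hne
  simp only [Fin.val_castSucc, Fin.val_succ, Finset.mem_Ico] at hk
  exact absurd (Subtype.ext (by dsimp only; omega)) hne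

theorem setOf_mem_take_ofFn {α : Type*} {m : ℕ} (c : Fin m → α) (k : ℕ) :
    {y | y ∈ (List.ofFn c).take k} = c '' {i | (i : ℕ) < k} := by
  ext y
  simp only [Set.mem_ofPred_eq, List.mem_take_iff_getElem, List.getElem_ofFn, List.length_ofFn,
    Set.mem_image, lt_min_iff]
  exact ⟨fun ⟨j, hj, hy⟩ => ⟨⟨j, hj.2⟩, hj.1, hy⟩, fun ⟨i, hi, hy⟩ => ⟨i, ⟨hi, i.isLt⟩, hy⟩⟩

def eu (K : Type*) [Field K] {n : ℕ} (p : Fin n × Fin n) : UJ K n :=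
  if h : p.1 ≤ p.2 then Eu K p.1 p.2 h else 0

section UnitProducts

variable {K : Type*} [Field K] {n m : ℕ}

theorem eu_of_le {a b : Fin n} (h : a ≤ b) : eu K (a, b) = Eu K a b h := dif_pos h

theorem eu_ne_zero {a b : Fin n} (h : a ≤ b) : eu K (a, b) ≠ 0 := by
  rw [eu_of_le h]
  intro h0
  simpa [Eu] using congrFun (congrFun (congrArg Subtype.val h0) a) b

theorem jmul_eu_eu {a b c d : Fin n} (hab : a < b) (hcd : c < d) :
    jmul (eu K (a, b)) (eu K (c, d)) =
      if d = a then eu K (c, b) else if c = b then eu K (a, d) else 0 := by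
  apply Subtype.ext
  have hval : ∀ {i j : Fin n} (h : i ≤ j), (eu K (i, j)).val = single i j 1 :=
    fun h => by rw [eu_of_le h]; rfl
  rw [show (jmul (eu K (a, b)) (eu K (c, d))).val = _ * _ + _ * _ from rfl, hval hab.le,
    hval hcd.le, single_one_mul_add_mul_single_one hab hcd]
  split_ifs with hda hcb
  · exact (hval (hcd.trans (hda ▸ hab)).le).symm
  · exact (hval (hab.trans (hcb ▸ hcd)).le).symm
  · rfl

theorem jmul_zero_left (y : UJ K n) : jmul 0 y = 0 := by
  apply Subtype.ext
  simp [jmul]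

theorem jprod_append_singleton {l : List (UJ K n)} (hl : l ≠ []) (x : UJ K n) :
    jprod (l ++ [x]) = jmul (jprod l) x := by
  obtain ⟨y, l, rfl⟩ := List.exists_cons_of_ne_nil hl
  simp [jprod, List.foldl_append]

theorem jprod_ne_zero_of_prefix {p l : List (UJ K n)} (hpl : p <+: l) (hp : p ≠ [])
    (hl : jprod l ≠ 0) : jprod p ≠ 0 := by
  obtain ⟨q, rfl⟩ := hpl
  obtain ⟨y, p, rfl⟩ := List.exists_cons_of_ne_nil hp
  intro h0
  have hzero : ∀ r : List (UJ K n), r.foldl jmul 0 = 0 := fun r => by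
    induction r with
    | nil => rfl
    | cons z r ih => rw [List.foldl_cons, jmul_zero_left, ih]
  apply hl
  rw [List.cons_append, jprod, List.foldl_append]
  exact (congrArg (q.foldl jmul) h0).trans (hzero q)

theorem jprod_map_eu_of_ne_zero (ps : List (Fin n × Fin n)) (hps : ∀ p ∈ ps, p.1 < p.2)
    (h : jprod (ps.map (eu K)) ≠ 0) :
    ∃ a b : Fin n, a < b ∧ jprod (ps.map (eu K)) = eu K (a, b) ∧
      (b : ℕ) - a = (ps.map fun p => (p.2 : ℕ) - p.1).sum := by
  induction ps using List.reverseRecOn with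
  | nil => exact absurd rfl h
  | append_singleton ps q ih =>
    obtain ⟨c, d⟩ := q
    have hcd : c < d := hps (c, d) (by simp)
    rcases eq_or_ne ps [] with rfl | hne
    · exact ⟨c, d, hcd, rfl, by simp⟩
    rw [List.map_append, List.map_singleton, jprod_append_singleton (by simpa using hne)] at h ⊢
    obtain ⟨a, b, hab, hprod, hlen⟩ := ih (fun p hp => hps p (by simp [hp]))
      (fun h0 => h (by rw [h0, jmul_zero_left]))
    rw [hprod, jmul_eu_eu hab hcd] at h ⊢
    simp only [List.map_append, List.map_singleton, List.sum_append, List.sum_singleton, ← hlen]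
    split_ifs at h ⊢ with hda hcb
    · exact ⟨c, b, hcd.trans (hda ▸ hab), rfl, by subst hda; omega⟩
    · exact ⟨a, d, hab.trans (hcb ▸ hcd), rfl, by subst hcb; omega⟩
    · exact absurd rfl h

def succPair (x : Fin m) : Fin (m + 1) × Fin (m + 1) := (x.castSucc, x.succ)

theorem jmul_eu_succPair_of_adjacent {l : List (Fin m)} {a b : Fin (m + 1)} {x : Fin m}
    (hab : a < b) (hl : ∀ y, y ∈ l ↔ a ≤ y.castSucc ∧ y.castSucc < b)
    (hx : x.succ = a ∨ x.castSucc = b) :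
    x ∉ l ∧ ∃ a' b', a' < b' ∧ jmul (eu K (a, b)) (eu K (succPair x)) = eu K (a', b') ∧
      ∀ y, y ∈ l ++ [x] ↔ a' ≤ y.castSucc ∧ y.castSucc < b' := by
  have hxl : x ∉ l := by
    rw [hl]; rcases hx with rfl | rfl <;> simp [Fin.le_def, Fin.lt_def]
  refine ⟨hxl, ?_⟩
  rw [succPair, jmul_eu_eu hab Fin.castSucc_lt_succ]
  simp only [List.mem_append, List.mem_singleton, hl, Fin.ext_iff, Fin.le_def, Fin.lt_def,
    Fin.val_castSucc, Fin.val_succ] at hx ⊢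
  rcases hx with hxa | hxb
  · rw [if_pos hxa]
    exact ⟨x.castSucc, b, by simp only [Fin.val_castSucc]; omega, rfl,
      fun y => by simp only [Fin.val_castSucc]; omega⟩
  · rw [if_neg (by omega), if_pos hxb]
    exact ⟨a, x.succ, by simp only [Fin.val_succ]; omega, rfl,
      fun y => by simp only [Fin.val_succ]; omega⟩

theorem jprod_succPair_singleton (x : Fin m) :
    jprod (([x].map succPair).map (eu K)) = eu K (succPair x) ∧
      ∀ y, y ∈ [x] ↔ x.castSucc ≤ y.castSucc ∧ y.castSucc < x.succ := by
  refine ⟨rfl, fun y => ?_⟩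
  simp only [List.mem_singleton, Fin.ext_iff, Fin.le_def, Fin.lt_def, Fin.val_castSucc,
    Fin.val_succ]
  omega

theorem jprod_succPair_of_ne_zero (l : List (Fin m))
    (h : jprod ((l.map succPair).map (eu K)) ≠ 0) :
    l.Nodup ∧ ∃ a b, a < b ∧ jprod ((l.map succPair).map (eu K)) = eu K (a, b) ∧
      ∀ y, y ∈ l ↔ a ≤ y.castSucc ∧ y.castSucc < b := by
  induction l using List.reverseRecOn with
  | nil => exact absurd rfl h
  | append_singleton l x ih =>
    rcases eq_or_ne l [] with rfl | hne
    · exact ⟨List.nodup_singleton x, _, _, Fin.castSucc_lt_succ, jprod_succPair_singleton x⟩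
    simp only [List.map_append, List.map_singleton] at h ⊢
    rw [jprod_append_singleton (by simpa using hne)] at h ⊢
    obtain ⟨hnd, a, b, hab, hprod, hl⟩ := ih (fun h0 => h (by rw [h0, jmul_zero_left]))
    rw [hprod] at h ⊢
    have hadj : x.succ = a ∨ x.castSucc = b := by
      by_contra hx
      rw [not_or] at hx
      rw [succPair, jmul_eu_eu hab Fin.castSucc_lt_succ, if_neg hx.1, if_neg hx.2] at h
      exact h rfl
    obtain ⟨hxl, a', b', hab', hmul, hl'⟩ := jmul_eu_succPair_of_adjacent (K := K) hab hl hadj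
    exact ⟨hnd.append (List.nodup_singleton x) (by simpa using hxl), a', b', hab', hmul, hl'⟩

theorem adjacent_of_ordConnected {l : List (Fin m)} {a b : Fin (m + 1)} {x : Fin m} (hab : a < b)
    (hl : ∀ y, y ∈ l ↔ a ≤ y.castSucc ∧ y.castSucc < b) (hxl : x ∉ l)
    (hoc : {y | y ∈ l ++ [x]}.OrdConnected) :
    x.succ = a ∨ x.castSucc = b := by
  have hmem : ∀ y, y ∈ {y | y ∈ l ++ [x]} ↔ (a : ℕ) ≤ y ∧ (y : ℕ) < b ∨ y = x := by
    simp [hl, Fin.le_def, Fin.lt_def]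
  have hxl' : ¬((a : ℕ) ≤ x ∧ (x : ℕ) < b) := by simpa [hl, Fin.le_def, Fin.lt_def] using hxl
  have hb : (b : ℕ) ≤ m := Nat.lt_succ_iff.mp b.isLt
  by_contra hx
  simp only [not_or, Fin.ext_iff, Fin.val_succ, Fin.val_castSucc] at hx
  -- a position strictly between `x` and the block `[a, b)` would have to lie in `l ++ [x]`
  rcases Nat.lt_or_ge (x : ℕ) a with hxa | hxa
  · have hgap := hoc.out ((hmem x).2 (Or.inr rfl))
      ((hmem ⟨a, by omega⟩).2 (Or.inl ⟨le_rfl, hab⟩))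
      (show (⟨x + 1, by omega⟩ : Fin m) ∈ Set.Icc x ⟨a, by omega⟩ by
        simp only [Set.mem_Icc, Fin.le_def]; omega)
    rcases (hmem _).1 hgap with h' | h'
    · simp only at h'; omega
    · simp [Fin.ext_iff] at h'
  · have hgap := hoc.out
      ((hmem ⟨b - 1, by omega⟩).2 (Or.inl ⟨by dsimp only; omega, by dsimp only; omega⟩))
      ((hmem x).2 (Or.inr rfl))
      (show (⟨b, by omega⟩ : Fin m) ∈ Set.Icc ⟨b - 1, by omega⟩ x by
        simp only [Set.mem_Icc, Fin.le_def]; omega)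
    rcases (hmem _).1 hgap with h' | h'
    · simp only at h'; omega
    · exact hx.2 (by rw [← h'])

theorem jprod_succPair_of_ordConnected (l : List (Fin m)) (hl : l ≠ []) (hnd : l.Nodup)
    (hoc : ∀ p, p <+: l → {y | y ∈ p}.OrdConnected) :
    ∃ a b, a < b ∧ jprod ((l.map succPair).map (eu K)) = eu K (a, b) ∧
      ∀ y, y ∈ l ↔ a ≤ y.castSucc ∧ y.castSucc < b := by
  induction l using List.reverseRecOn with
  | nil => exact absurd rfl hl
  | append_singleton l x ih =>
    rcases eq_or_ne l [] with rfl | hne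
    · exact ⟨_, _, Fin.castSucc_lt_succ, jprod_succPair_singleton x⟩
    simp only [List.map_append, List.map_singleton]
    rw [jprod_append_singleton (by simpa using hne)]
    obtain ⟨a, b, hab, hprod, hl⟩ := ih hne (hnd.sublist (List.sublist_append_left l [x]))
      (fun p hp => hoc p (hp.trans (List.prefix_append l [x])))
    rw [hprod]
    have hxl : x ∉ l := fun hx => List.disjoint_of_nodup_append hnd hx (List.mem_singleton_self x)
    obtain ⟨-, a', b', hab', hmul, hl'⟩ := jmul_eu_succPair_of_adjacent (K := K) hab hl
      (adjacent_of_ordConnected hab hl hxl (hoc _ (List.prefix_refl _)))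
    exact ⟨a', b', hab', hmul, hl'⟩

theorem jprod_succPair_ne_zero_iff {l : List (Fin m)} (hl : l ≠ []) :
    jprod ((l.map succPair).map (eu K)) ≠ 0 ↔
      l.Nodup ∧ ∀ p, p <+: l → {y | y ∈ p}.OrdConnected := by
  constructor
  · intro h
    refine ⟨(jprod_succPair_of_ne_zero l h).1, fun p hp => ?_⟩
    rcases eq_or_ne p [] with rfl | hp0
    · simpa using Set.ordConnected_empty
    have hpne := jprod_ne_zero_of_prefix ((hp.map _).map _) (by simpa using hp0) h
    obtain ⟨-, a, b, -, -, hmem⟩ := jprod_succPair_of_ne_zero p hpne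
    refine ⟨fun x hx z hz y ⟨hxy, hyz⟩ => ?_⟩
    simp only [Set.mem_ofPred_eq, hmem] at hx hz ⊢
    exact ⟨hx.1.trans (Fin.castSucc_le_castSucc_iff.2 hxy),
      (Fin.castSucc_le_castSucc_iff.2 hyz).trans_lt hz.2⟩
  · rintro ⟨hnd, hoc⟩
    obtain ⟨a, b, hab, hprod, -⟩ := jprod_succPair_of_ordConnected (K := K) l hl hnd hoc
    rw [hprod]
    exact eu_ne_zero hab.le

theorem exists_succPair_of_jprod_ne_zero {i j : Fin m → Fin (m + 1)} (hij : ∀ k, i k < j k)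
    (h : jprod ((List.ofFn fun k => (i k, j k)).map (eu K)) ≠ 0) :
    ∃ c : Fin m → Fin m, ∀ k, succPair (c k) = (i k, j k) := by
  obtain ⟨a, b, -, -, hlen⟩ := jprod_map_eu_of_ne_zero _ (by simpa [List.mem_ofFn] using hij) h
  simp only [List.map_ofFn, List.sum_ofFn, Function.comp_apply] at hlen
  -- the lengths of the `m` factors add up to `b - a ≤ m`, so each of them is one
  have hone : ∀ k, (j k : ℕ) - i k = 1 := eq_one_of_sum_le_card (f := fun k => (j k : ℕ) - i k)
    (fun k => Nat.sub_pos_of_lt (hij k)) (by simp only [Fintype.card_fin]; have := b.isLt; omega)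
  refine ⟨fun k => ⟨i k, by have := hone k; have := (j k).isLt; omega⟩, fun k => ?_⟩
  have := hone k; have := hij k
  simp only [succPair, Prod.ext_iff, Fin.ext_iff, Fin.val_castSucc, Fin.val_succ, true_and]
  omega

theorem exists_mem_TT_of_jprod_ne_zero {G : Type*} [CommGroup G] (η μ : Fin m → G)
    (r : Fin m → UJ K (m + 1))
    (hr : ∀ k, ∃ (i j : Fin (m + 1)) (hij : i < j), r k = Eu K i j hij.le ∧ elemDeg G η i j = μ k)
    (hne : jprod (List.ofFn r) ≠ 0) :
    ∃ σ : Equiv.Perm (Fin m), σ ∈ TT m ∧ μ = fun k => η (σ⁻¹ k) := by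
  choose i j hij hr hdeg using hr
  have hofn : List.ofFn r = (List.ofFn fun k => (i k, j k)).map (eu K) := by
    rw [List.map_ofFn]
    exact congrArg List.ofFn (funext fun k => (hr k).trans (eu_of_le _).symm)
  obtain ⟨c, hc⟩ := exists_succPair_of_jprod_ne_zero hij (hofn ▸ hne)
  have hofn' : List.ofFn r = ((List.ofFn c).map succPair).map (eu K) := by
    simp only [hofn, List.map_ofFn, Function.comp_def, hc]
  have hm : NeZero m := ⟨by rintro rfl; exact hne rfl⟩
  obtain ⟨hnd, hoc⟩ := (jprod_succPair_ne_zero_iff (by simpa using NeZero.ne m)).1 (hofn' ▸ hne)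
  let e := Equiv.ofBijective c (Finite.injective_iff_bijective.1 (List.nodup_ofFn.1 hnd))
  refine ⟨e.symm, (mem_TT_iff _).2 fun k => ?_, funext fun k => ?_⟩
  · have : {x | (e.symm x : ℕ) < k} = {y | y ∈ (List.ofFn c).take k} := by
      rw [setOf_mem_take_ofFn, show c = ⇑e from rfl, e.image_eq_preimage_symm]
      rfl
    exact this ▸ hoc _ (List.take_prefix _ _)
  · have h := hc k
    simp only [succPair, Prod.ext_iff] at h
    rw [← hdeg, ← h.1, ← h.2, elemDeg_castSucc_succ_s9]
    rfl

theorem exists_jprod_ne_zero_of_mem_TT {G : Type*} [CommGroup G] (η μ : Fin m → G)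
    {σ : Equiv.Perm (Fin m)} (hσ : σ ∈ TT m) (hμ : μ = fun k => η (σ⁻¹ k)) :
    ∃ r : Fin m → UJ K (m + 1),
      (∀ k, ∃ (i j : Fin (m + 1)) (hij : i < j), r k = Eu K i j hij.le ∧ elemDeg G η i j = μ k) ∧
      jprod (List.ofFn r) ≠ 0 := by
  have : NeZero m := ⟨hσ.choose.pos.ne'⟩
  refine ⟨fun k => eu K (succPair (σ⁻¹ k)), fun k => ⟨_, _, Fin.castSucc_lt_succ, eu_of_le _,
    by rw [hμ, elemDeg_castSucc_succ_s9]⟩, ?_⟩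
  have hofn : List.ofFn (fun k => eu K (succPair (σ⁻¹ k))) =
      ((List.ofFn ⇑σ⁻¹).map succPair).map (eu K) := by
    simp only [List.map_ofFn, Function.comp_def]
  rw [hofn, jprod_succPair_ne_zero_iff (by simpa using NeZero.ne m)]
  refine ⟨List.nodup_ofFn.2 σ⁻¹.injective, fun p hp => ?_⟩
  rw [List.prefix_iff_eq_take.1 hp, setOf_mem_take_ofFn, Equiv.Perm.inv_def,
    Equiv.image_symm_eq_preimage]
  exact (mem_TT_iff σ).1 hσ p.length

end UnitProducts

theorem statement_9_general {K : Type*} [Field K]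
    {n : ℕ} {G : Type*} [CommGroup G] (η μ : Fin (n - 1) → G) :
    (∃ r : Fin (n - 1) → UJ K n,
      (∀ k : Fin (n - 1), ∃ (i j : Fin n) (hij : i < j),
        r k = Eu K i j hij.le ∧ elemDeg G η i j = μ k) ∧
      jprod (List.ofFn r) ≠ 0) ↔
    (∃ σ : Equiv.Perm (Fin (n - 1)), σ ∈ TT (n - 1) ∧ μ = fun k => η (σ⁻¹ k)) := by
  cases n with
  | zero => exact iff_of_false (fun ⟨_, _, h⟩ => h rfl) (fun ⟨_, ⟨t, _⟩, _⟩ => t.elim0)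
  | succ m =>
    exact ⟨fun ⟨r, hr, hne⟩ => exists_mem_TT_of_jprod_ne_zero η μ r hr hne,
      fun ⟨_, hσ, hμ⟩ => exists_jprod_ne_zero_of_mem_TT η μ hσ hμ⟩

/-- A sequence `μ ∈ G^{n−1}` is Jordan `η`-good for the elementary grading `(UJ_n, η)`
iff `μ = ση` for some `σ ∈ 𝒯_{n−1}`. -/
theorem statement_9 {K : Type*} [Field K] (h2 : (2 : K) ≠ 0)
    {n : ℕ} (hn : 2 ≤ n) {G : Type*} [CommGroup G] (η μ : Fin (n - 1) → G) :
    (∃ r : Fin (n - 1) → UJ K n,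
      (∀ k : Fin (n - 1), ∃ (i j : Fin n) (hij : i < j),
        r k = Eu K i j hij.le ∧ elemDeg G η i j = μ k) ∧
      jprod (List.ofFn r) ≠ 0) ↔
    (∃ σ : Equiv.Perm (Fin (n - 1)), σ ∈ TT (n - 1) ∧ μ = fun k => η (σ⁻¹ k)) :=
  statement_9_general η μ
end

section
/- Let K be a field of characteristic different from 2, G an abelian group, q = ⌈(n−1)/2⌉, η, η' ∈ G^q, and let t_1, t_2 ∈ G be elements of order 2 with t_1 ≠ t_2. Then the MT gradings (UJ_n, t_1, η) and (UJ_n, t_2, η') are not graded-isomorphic. -/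
open Matrix

/-! In an MT grading `(UJ_n, t, η)` every component of degree other than `1` and `t` consists of
strictly upper triangular, hence nilpotent, matrices. A graded isomorphism would send `Y⁻_{1:0}`,
of degree `t₁`, into such a component of the second grading, since `t₁ ∉ {1, t₂}`. As
`Y⁻_{1:0}` squares to the idempotent `Y⁺_{1:0}` and a Jordan isomorphism preserves squares in
characteristic `≠ 2`, the image of `Y⁺_{1:0}` would be a nilpotent idempotent, i.e. `0`. -/

namespace Matrix

variable {R : Type*} [Semiring R] {n : ℕ}

theorem pow_apply_eq_zero_of_strictUpper {M : Matrix (Fin n) (Fin n) R}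
    (hM : ∀ i j, j ≤ i → M i j = 0) (k : ℕ) (i j : Fin n) (hij : (j : ℕ) < i + k) :
    (M ^ k) i j = 0 := by
  induction k generalizing j with
  | zero => exact one_apply_ne' (Fin.ne_of_lt (by omega))
  | succ k ih =>
    rw [pow_succ, mul_apply]
    refine Finset.sum_eq_zero fun l _ => ?_
    rcases lt_or_ge (l : ℕ) (i + k) with hl | hl
    · rw [ih l hl, zero_mul]
    · rw [hM l j (Fin.le_def.mpr (by omega)), mul_zero]

theorem isNilpotent_of_strictUpper {M : Matrix (Fin n) (Fin n) R}
    (hM : ∀ i j, j ≤ i → M i j = 0) : IsNilpotent M :=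
  ⟨n, ext fun i j => pow_apply_eq_zero_of_strictUpper hM n i j (by omega)⟩

end Matrix

section UJ

variable {K : Type*} [Field K] {n : ℕ}

variable (K n) in
def strictUpper : Submodule K (UJ K n) where
  carrier := {x | ∀ i j, j ≤ i → x.1 i j = 0}
  add_mem' ha hb i j h := by simp [ha i j h, hb i j h]
  zero_mem' _ _ _ := rfl
  smul_mem' c _ ha i j h := by simp [ha i j h]

theorem Eu_mem_strictUpper {a b : Fin n} (hab : a < b) : Eu K a b hab.le ∈ strictUpper K n := by
  intro i j hji
  show single a b (1 : K) i j = 0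
  exact single_apply_of_ne _ _ _ _ _ fun ⟨hi, hj⟩ => hji.not_gt (hi ▸ hj ▸ hab)

theorem Yp_mem_strictUpper (i m : ℕ) (h : i + (m + 1) < n) : Yp K i (m + 1) h ∈ strictUpper K n :=
  add_mem (Eu_mem_strictUpper (Fin.mk_lt_mk.mpr (by omega)))
    (Eu_mem_strictUpper (Fin.mk_lt_mk.mpr (by omega)))

theorem Ym_mem_strictUpper (i m : ℕ) (h : i + (m + 1) < n) : Ym K i (m + 1) h ∈ strictUpper K n :=
  sub_mem (Eu_mem_strictUpper (Fin.mk_lt_mk.mpr (by omega)))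
    (Eu_mem_strictUpper (Fin.mk_lt_mk.mpr (by omega)))

theorem mtDeg_zero {G : Type*} [CommGroup G] (η : Fin (n / 2) → G) (i : ℕ) (h : i + 0 < n) :
    mtDeg G η i 0 h = 1 := by
  simp [mtDeg]

theorem mtComp_le_strictUpper {G : Type*} [CommGroup G] (t : G) (η : Fin (n / 2) → G) {g : G}
    (hg1 : g ≠ 1) (hgt : g ≠ t) : mtComp K t η g ≤ strictUpper K n := by
  rw [mtComp, Submodule.span_le]
  rintro x (⟨i, _ | m, h, hdeg, rfl⟩ | ⟨i, _ | m, h, hdeg, rfl⟩)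
  · exact absurd (hdeg ▸ mtDeg_zero η i h) hg1
  · exact Yp_mem_strictUpper i m h
  · exact absurd (by rw [← hdeg, mtDeg_zero, mul_one]) hgt
  · exact Ym_mem_strictUpper i m h

theorem Yp_ne_zero (h2 : (2 : K) ≠ 0) (i m : ℕ) (h : i + m < n) : Yp K i m h ≠ 0 := by
  intro h0
  have hentry := congrArg (fun x : UJ K n => x.1 ⟨i, by omega⟩ ⟨i + m, h⟩) h0
  by_cases hmir : i = n - 1 - i - m
  · have hmir' : i + m = n - 1 - i := by omega
    simp [Yp, Eu, ← hmir, hmir'] at hentry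
    exact h2 (by rw [← one_add_one_eq_two]; exact hentry)
  · simp [Yp, Eu, Fin.ext_iff, Ne.symm hmir] at hentry

theorem Yp_zero_val_mul_self (i : ℕ) (h : i + 0 < n) (hi : i ≠ n - 1 - i) :
    (Yp K i 0 h).1 * (Yp K i 0 h).1 = (Yp K i 0 h).1 := by
  have hne : (⟨i, by omega⟩ : Fin n) ≠ ⟨n - 1 - i, by omega⟩ := Fin.ne_of_val_ne hi
  simp [Yp, Eu, add_mul, mul_add, single_mul_single_of_ne _ _ _ _ hne,
    single_mul_single_of_ne _ _ _ _ hne.symm]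

theorem Ym_zero_val_mul_self (i : ℕ) (h : i + 0 < n) (hi : i ≠ n - 1 - i) :
    (Ym K i 0 h).1 * (Ym K i 0 h).1 = (Yp K i 0 h).1 := by
  have hne : (⟨i, by omega⟩ : Fin n) ≠ ⟨n - 1 - i, by omega⟩ := Fin.ne_of_val_ne hi
  simp [Yp, Ym, Eu, sub_mul, mul_sub, single_mul_single_of_ne _ _ _ _ hne,
    single_mul_single_of_ne _ _ _ _ hne.symm]

theorem jmul_self_val (x : UJ K n) : (jmul x x).1 = (2 : K) • (x.1 * x.1) := by
  simp [jmul, two_smul]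

theorem val_mul_self_map_of_val_mul_self (h2 : (2 : K) ≠ 0) {ψ : UJ K n →ₗ[K] UJ K n}
    (hψ : ∀ x y, ψ (jmul x y) = jmul (ψ x) (ψ y)) {x y : UJ K n} (hxy : x.1 * x.1 = y.1) :
    (ψ x).1 * (ψ x).1 = (ψ y).1 := by
  have hxy' : jmul x x = (2 : K) • y := Subtype.ext (by simp [jmul_self_val, hxy])
  apply smul_right_injective _ h2
  simpa [← jmul_self_val, ← hψ] using congrArg Subtype.val (congrArg ψ hxy')

end UJ

theorem statement_15_general {K : Type*} [Field K] (h2 : (2 : K) ≠ 0)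
    {n : ℕ} (hn : 2 ≤ n) {G : Type*} [CommGroup G]
    (t₁ t₂ : G) (ht₁ : orderOf t₁ = 2) (hne : t₁ ≠ t₂)
    (η η' : Fin (n / 2) → G) :
    ¬ GradedIso (mtComp K t₁ η) (mtComp K t₂ η') := by
  rintro ⟨ψ, hψ, hcomp⟩
  have h0 : 0 + 0 < n := by omega
  have hmir : 0 ≠ n - 1 - 0 := by omega
  have hz : Ym K 0 0 h0 ∈ mtComp K t₁ η t₁ :=
    Submodule.subset_span (Or.inr ⟨0, 0, h0, by rw [mtDeg_zero, mul_one], rfl⟩)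
  have hψz : ψ (Ym K 0 0 h0) ∈ strictUpper K n := by
    refine mtComp_le_strictUpper t₂ η' (fun h => by simp [h] at ht₁) hne ?_
    exact hcomp t₁ ▸ Submodule.mem_map_of_mem hz
  have hsq : (ψ (Ym K 0 0 h0)).1 * (ψ (Ym K 0 0 h0)).1 = (ψ (Yp K 0 0 h0)).1 :=
    val_mul_self_map_of_val_mul_self (ψ := ψ.toLinearMap) h2 hψ (Ym_zero_val_mul_self 0 h0 hmir)
  have hnil : IsNilpotent (ψ (Yp K 0 0 h0)).1 := by
    rw [← hsq, ← sq]
    exact (isNilpotent_of_strictUpper hψz).pow_of_pos two_ne_zero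
  have hidem : IsIdempotentElem (ψ (Yp K 0 0 h0)).1 :=
    val_mul_self_map_of_val_mul_self (ψ := ψ.toLinearMap) h2 hψ (Yp_zero_val_mul_self 0 h0 hmir)
  refine Yp_ne_zero h2 0 0 h0 (ψ.map_eq_zero_iff.mp (Subtype.ext ?_))
  exact hidem.eq_zero_of_isNilpotent hnil

/-- MT gradings with distinct order-two elements `t₁ ≠ t₂` are not graded-isomorphic. -/
theorem statement_15 {K : Type*} [Field K] (h2 : (2 : K) ≠ 0)
    {n : ℕ} (hn : 2 ≤ n) {G : Type*} [CommGroup G]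
    (t₁ t₂ : G) (ht₁ : orderOf t₁ = 2) (ht₂ : orderOf t₂ = 2) (hne : t₁ ≠ t₂)
    (η η' : Fin (n / 2) → G) :
    ¬ GradedIso (mtComp K t₁ η) (mtComp K t₂ η') :=
  statement_15_general h2 hn t₁ t₂ ht₁ hne η η'
end
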